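/- arXiv:2312.16785 — 2 statements merged into one kernel-verified Lean document; each statement's English description precedes it below -/
import Mathlib

section
/- Let g be a complex Lie algebra, n ⊆ g a subalgebra, ψ : n → ℂ a character, and V a g-module such that V = ⋃_{k≥0} V^{(k)} for the twisted n-action (i.e., V is locally ψ-nilpotent for n). If the space of Whittaker vectors Wh_ψ V is one-dimensional, spanned by a vector w that generates V as a U(g)-module, then V is a simple g-module. -/
attribute [local instance 100] LieRing.ofAssociativeRing

/-- The filtration step `V^{(k)}` for the twisted action of `n ⊆ g` on a `g`-module. -/
def twistFilt (g : Type*) [LieRing g] [LieAlgebra ℂ g] (n : LieSubalgebra ℂ g)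
    (ψ : n →ₗ⁅ℂ⁆ ℂ)
    (V : Type*) [AddCommGroup V] [Module ℂ V] [LieRingModule g V] [LieModule ℂ g V]
    (k : ℕ) : Set V :=
  {v : V | ∀ l : List n, l.length = k + 1 →
    l.foldr (fun (x : n) (w : V) => ⁅(x : g), w⁆ - ψ x • w) v = 0}

/-!
A nonzero submodule `N` contains a nonzero `v ∈ V^{(k)}`; applying twisted operators
`x • v = ⁅x, v⁆ - ψ x v` as long as `v` is not a Whittaker vector lowers `k` without leaving
`N` or reaching `0`, so `N` contains a nonzero Whittaker vector. By one-dimensionality this is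
a nonzero multiple of `w`, hence `w ∈ N`, and `N = ⊤` because `w` generates `V`.
-/

section Whittaker

variable {g : Type*} [LieRing g] [LieAlgebra ℂ g] {n : LieSubalgebra ℂ g} {ψ : n →ₗ⁅ℂ⁆ ℂ}
  {V : Type*} [AddCommGroup V] [Module ℂ V] [LieRingModule g V] [LieModule ℂ g V]

theorem mem_twistFilt_zero_iff {v : V} :
    v ∈ twistFilt g n ψ V 0 ↔ ∀ x : n, ⁅(x : g), v⁆ = ψ x • v := by
  refine ⟨fun hv x => sub_eq_zero.mp (hv [x] rfl), fun hv l hl => ?_⟩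
  obtain ⟨x, rfl⟩ := List.length_eq_one_iff.mp hl
  exact sub_eq_zero.mpr (hv x)

theorem twisted_lie_mem_twistFilt {k : ℕ} {v : V} (hv : v ∈ twistFilt g n ψ V (k + 1))
    (x : n) : ⁅(x : g), v⁆ - ψ x • v ∈ twistFilt g n ψ V k := fun l hl => by
  simpa [List.foldr_append] using hv (l ++ [x]) (by simp [hl])

theorem LieSubmodule.exists_whittaker_of_mem_twistFilt (N : LieSubmodule ℂ g V) (k : ℕ)
    {v : V} (hvN : v ∈ N) (hv₀ : v ≠ 0) (hv : v ∈ twistFilt g n ψ V k) :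
    ∃ u ∈ N, u ≠ 0 ∧ ∀ x : n, ⁅(x : g), u⁆ = ψ x • u := by
  induction k generalizing v with
  | zero => exact ⟨v, hvN, hv₀, mem_twistFilt_zero_iff.mp hv⟩
  | succ k ih =>
    by_cases hwh : ∀ x : n, ⁅(x : g), v⁆ = ψ x • v
    · exact ⟨v, hvN, hv₀, hwh⟩
    obtain ⟨x, hx⟩ := not_forall.mp hwh
    exact ih (N.sub_mem (N.lie_mem hvN) (N.smul_mem _ hvN)) (sub_ne_zero.mpr hx)
      (twisted_lie_mem_twistFilt hv x)

theorem LieSubmodule.exists_whittaker_of_ne_bot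
    (hloc : ∀ v : V, ∃ k : ℕ, v ∈ twistFilt g n ψ V k) {N : LieSubmodule ℂ g V} (hN : N ≠ ⊥) :
    ∃ u ∈ N, u ≠ 0 ∧ ∀ x : n, ⁅(x : g), u⁆ = ψ x • u := by
  obtain ⟨v, hvN, hv₀⟩ : ∃ v ∈ N, v ≠ 0 := by
    by_contra! h
    exact hN ((LieSubmodule.eq_bot_iff N).mpr h)
  obtain ⟨k, hk⟩ := hloc v
  exact N.exists_whittaker_of_mem_twistFilt k hvN hv₀ hk

end Whittaker

/-- a locally ψ-nilpotent `g`-module generated by a spanning vector of its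
1-dimensional space of Whittaker vectors is simple. -/
theorem simple_of_whittaker_one_dimensional
    (g : Type*) [LieRing g] [LieAlgebra ℂ g] (n : LieSubalgebra ℂ g) (ψ : n →ₗ⁅ℂ⁆ ℂ)
    (V : Type*) [AddCommGroup V] [Module ℂ V] [LieRingModule g V] [LieModule ℂ g V]
    (hloc : ∀ v : V, ∃ k : ℕ, v ∈ twistFilt g n ψ V k)
    (w : V) (hw : w ≠ 0)
    (hwh : ∀ v : V, (∀ x : n, ⁅(x : g), v⁆ = ψ x • v) ↔ ∃ c : ℂ, v = c • w)
    (hgen : LieSubmodule.lieSpan ℂ g {w} = ⊤) :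
    Nontrivial V ∧ ∀ N : LieSubmodule ℂ g V, N = ⊥ ∨ N = ⊤ := by
  refine ⟨⟨w, 0, hw⟩, fun N => or_iff_not_imp_left.mpr fun hN => ?_⟩
  obtain ⟨u, huN, hu₀, hu⟩ := N.exists_whittaker_of_ne_bot hloc hN
  obtain ⟨c, rfl⟩ := (hwh u).mp hu
  have hwN : w ∈ N := (N.toSubmodule.smul_mem_iff (left_ne_zero_of_smul hu₀)).mp huN
  rw [eq_top_iff, ← hgen]
  exact LieSubmodule.lieSpan_le.mpr (Set.singleton_subset_iff.mpr hwN)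
end

section
/- Let g be a complex Lie algebra, n ⊆ g a subalgebra, ψ : n → ℂ a character, and V a nonzero g-module lying in the twisted-nilpotent filtration V = ⋃_k V^{(k)}. Then every nonzero submodule of V contains a nonzero Whittaker vector of type ψ. In particular, if V ≠ 0 then Wh_ψ V ≠ 0. -/
attribute [local instance 100] LieRing.ofAssociativeRing

/-!
Every nonzero vector `v` of a submodule `N` lies in some `V^{(k)}`. If `v` is not a Whittaker
vector, some `x ∈ n` gives `x • v ≠ 0`; this vector still lies in `N` and already in
`V^{(k-1)}`. Descending in `k` must stop, at the latest in `V^{(0)}`, which consists of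
Whittaker vectors.
-/

section TwistFilt

variable {g : Type*} [LieRing g] [LieAlgebra ℂ g] {n : LieSubalgebra ℂ g} {ψ : n →ₗ⁅ℂ⁆ ℂ}
  {V : Type*} [AddCommGroup V] [Module ℂ V] [LieRingModule g V] [LieModule ℂ g V]

theorem exists_whittaker_mem_of_mem_twistFilt (N : LieSubmodule ℂ g V) (k : ℕ) :
    ∀ v ∈ N, v ≠ 0 → v ∈ twistFilt g n ψ V k →
      ∃ w ∈ N, w ≠ 0 ∧ ∀ x : n, ⁅(x : g), w⁆ = ψ x • w := by
  induction k with
  | zero => exact fun v hvN hv0 hv => ⟨v, hvN, hv0, mem_twistFilt_zero_iff.mp hv⟩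
  | succ k ih =>
    intro v hvN hv0 hv
    by_cases hwh : ∀ x : n, ⁅(x : g), v⁆ = ψ x • v
    · exact ⟨v, hvN, hv0, hwh⟩
    push Not at hwh
    obtain ⟨x, hx⟩ := hwh
    exact ih _ (sub_mem (N.lie_mem hvN) (N.smul_mem _ hvN)) (sub_ne_zero.mpr hx)
      (twisted_lie_mem_twistFilt hv x)

end TwistFilt

/-- in a locally ψ-nilpotent `g`-module, every nonzero submodule contains a
nonzero Whittaker vector of type ψ; in particular if `V ≠ 0` then `Wh_ψ V ≠ 0`. -/
theorem nonzero_submodule_contains_whittaker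
    (g : Type*) [LieRing g] [LieAlgebra ℂ g] (n : LieSubalgebra ℂ g) (ψ : n →ₗ⁅ℂ⁆ ℂ)
    (V : Type*) [AddCommGroup V] [Module ℂ V] [LieRingModule g V] [LieModule ℂ g V]
    (hloc : ∀ v : V, ∃ k : ℕ, v ∈ twistFilt g n ψ V k) :
    (∀ N : LieSubmodule ℂ g V, N ≠ ⊥ →
      ∃ v ∈ N, v ≠ 0 ∧ ∀ x : n, ⁅(x : g), v⁆ = ψ x • v) ∧
    (Nontrivial V → ∃ v : V, v ≠ 0 ∧ ∀ x : n, ⁅(x : g), v⁆ = ψ x • v) := by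
  have submodule_case : ∀ N : LieSubmodule ℂ g V, N ≠ ⊥ →
      ∃ v ∈ N, v ≠ 0 ∧ ∀ x : n, ⁅(x : g), v⁆ = ψ x • v := by
    intro N hN
    have := (LieSubmodule.nontrivial_iff_ne_bot ℂ g V).mpr hN
    obtain ⟨⟨v, hvN⟩, hv0⟩ := exists_ne (0 : N)
    obtain ⟨k, hk⟩ := hloc v
    exact exists_whittaker_mem_of_mem_twistFilt N k v hvN (by simpa using hv0) hk
  refine ⟨submodule_case, fun _ => ?_⟩
  obtain ⟨v, -, hv0, hwh⟩ := submodule_case ⊤ top_ne_bot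
  exact ⟨v, hv0, hwh⟩
end
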